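/- arXiv:2103.14237 — 2 statements merged into one kernel-verified Lean document; each statement's English description precedes it below -/
import Mathlib

section
/- Let D, E, H, Z be n×n real matrices, let S = [[D, E], [E, D]] and X = [[H, Z], [Z, H]] be 2n×2n block matrices, and let k be a natural number. Then X satisfies the core-EP equations for S with exponent k (i.e., X·S^(k+1) = S^k, S·X·X = X, and (S·X)ᵀ = S·X) if and only if H+Z satisfies the core-EP equations for D+E with exponent k and H−Z satisfies the core-EP equations for D−E with exponent k. -/
open Matrix

/-- `X` satisfies the core-EP equations for `S` with exponent `k`:
`X·S^(k+1) = S^k`, `S·X·X = X`, and `(S·X)ᵀ = S·X`. -/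
def CoreEPEqs {m : Type*} [Fintype m] [DecidableEq m]
    (S X : Matrix m m ℝ) (k : ℕ) : Prop :=
  X * S ^ (k + 1) = S ^ k ∧ S * X * X = X ∧ (S * X)ᵀ = S * X

private noncomputable def phi {n : ℕ} (A B : Matrix (Fin n) (Fin n) ℝ) :
    Matrix (Fin n ⊕ Fin n) (Fin n ⊕ Fin n) ℝ :=
  Matrix.fromBlocks ((2:ℝ)⁻¹ • (A + B)) ((2:ℝ)⁻¹ • (A - B))
    ((2:ℝ)⁻¹ • (A - B)) ((2:ℝ)⁻¹ • (A + B))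

private lemma phi_one {n : ℕ} : phi (n := n) 1 1 = 1 := by
  have h1 : (2:ℝ)⁻¹ • ((1 : Matrix (Fin n) (Fin n) ℝ) + 1) = 1 := by module
  have h2 : (2:ℝ)⁻¹ • ((1 : Matrix (Fin n) (Fin n) ℝ) - 1) = 0 := by module
  simp [phi, h1, h2, Matrix.fromBlocks_one]

private lemma phi_mul {n : ℕ} (A B C D : Matrix (Fin n) (Fin n) ℝ) :
    phi A B * phi C D = phi (A * C) (B * D) := by
  unfold phi
  rw [Matrix.fromBlocks_multiply, Matrix.fromBlocks_inj]
  refine ⟨?_, ?_, ?_, ?_⟩ <;>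
  · simp only [Matrix.smul_mul, Matrix.mul_smul, mul_add, add_mul, mul_sub, sub_mul, smul_smul]
    module

private lemma phi_pow {n : ℕ} (A B : Matrix (Fin n) (Fin n) ℝ) (m : ℕ) :
    phi A B ^ m = phi (A ^ m) (B ^ m) := by
  induction m with
  | zero => simpa using phi_one.symm
  | succ m ih => rw [pow_succ, pow_succ, pow_succ, ih, phi_mul]

private lemma phi_transpose {n : ℕ} (A B : Matrix (Fin n) (Fin n) ℝ) :
    (phi A B)ᵀ = phi Aᵀ Bᵀ := by
  simp [phi, Matrix.fromBlocks_transpose, Matrix.transpose_smul, transpose_add, transpose_sub]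

private lemma phi_eq_iff {n : ℕ} (A B C D : Matrix (Fin n) (Fin n) ℝ) :
    phi A B = phi C D ↔ A = C ∧ B = D := by
  constructor
  · intro h
    unfold phi at h
    rw [Matrix.fromBlocks_inj] at h
    obtain ⟨h1, h2, -, -⟩ := h
    constructor
    · have : A = (2:ℝ)⁻¹ • (A + B) + (2:ℝ)⁻¹ • (A - B) := by module
      rw [this, h1, h2]; module
    · have : B = (2:ℝ)⁻¹ • (A + B) - (2:ℝ)⁻¹ • (A - B) := by module
      rw [this, h1, h2]; module
  · rintro ⟨rfl, rfl⟩; rfl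

private lemma fromBlocks_eq_phi {n : ℕ} (A B : Matrix (Fin n) (Fin n) ℝ) :
    Matrix.fromBlocks A B B A = phi (A + B) (A - B) := by
  unfold phi
  rw [Matrix.fromBlocks_inj]
  refine ⟨?_, ?_, ?_, ?_⟩ <;> module

private lemma coreEP_phi {n : ℕ} (S1 S2 X1 X2 : Matrix (Fin n) (Fin n) ℝ) (k : ℕ) :
    CoreEPEqs (phi S1 S2) (phi X1 X2) k ↔ CoreEPEqs S1 X1 k ∧ CoreEPEqs S2 X2 k := by
  unfold CoreEPEqs
  rw [phi_pow, phi_pow, phi_mul, phi_mul, phi_mul, phi_transpose,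
    phi_eq_iff, phi_eq_iff, phi_eq_iff]
  tauto

theorem coreEP_block_iff {n : ℕ} (D E H Z : Matrix (Fin n) (Fin n) ℝ) (k : ℕ) :
    CoreEPEqs (Matrix.fromBlocks D E E D) (Matrix.fromBlocks H Z Z H) k ↔
      CoreEPEqs (D + E) (H + Z) k ∧ CoreEPEqs (D - E) (H - Z) k := by
  rw [fromBlocks_eq_phi, fromBlocks_eq_phi, coreEP_phi]
end

section
/- Let D, E, H, Z be n×n real matrices, let S = [[D, E], [E, D]] and X = [[H, Z], [Z, H]] be 2n×2n block matrices, and let k be a natural number. Then X·S^(k+1) = S^k holds if and only if both (H+Z)·(D+E)^(k+1) = (D+E)^k and (H−Z)·(D−E)^(k+1) = (D−E)^k hold. -/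
open Matrix

lemma pow_block_aux {n : ℕ} (D E : Matrix (Fin n) (Fin n) ℝ) (k : ℕ) :
    ∃ A B : Matrix (Fin n) (Fin n) ℝ,
      (Matrix.fromBlocks D E E D) ^ k = Matrix.fromBlocks A B B A ∧
      A + B = (D + E) ^ k ∧ A - B = (D - E) ^ k := by
  induction k with
  | zero =>
      exact ⟨1, 0, by simp [Matrix.fromBlocks_one], by simp, by simp⟩
  | succ k ih =>
      obtain ⟨A, B, hS, hp, hm⟩ := ih
      refine ⟨A * D + B * E, A * E + B * D, ?_, ?_, ?_⟩
      · rw [pow_succ, hS, Matrix.fromBlocks_multiply]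
        congr 1 <;> abel
      · rw [pow_succ, ← hp, add_mul, mul_add, mul_add]; abel
      · rw [pow_succ, ← hm, sub_mul, mul_sub, mul_sub]; abel

theorem block_oneK_iff {n : ℕ} (D E H Z : Matrix (Fin n) (Fin n) ℝ) (k : ℕ) :
    (Matrix.fromBlocks H Z Z H) * (Matrix.fromBlocks D E E D) ^ (k + 1) =
        (Matrix.fromBlocks D E E D) ^ k ↔
      (H + Z) * (D + E) ^ (k + 1) = (D + E) ^ k ∧
        (H - Z) * (D - E) ^ (k + 1) = (D - E) ^ k := by
  obtain ⟨A, B, hS, hp, hm⟩ := pow_block_aux D E k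
  obtain ⟨A', B', hS', hp', hm'⟩ := pow_block_aux D E (k + 1)
  rw [hS, hS', ← hp, ← hm, ← hp', ← hm', Matrix.fromBlocks_multiply,
    Matrix.fromBlocks_inj]
  constructor
  · rintro ⟨h1, h2, -, -⟩
    constructor
    · rw [add_mul, mul_add, mul_add, ← h1, ← h2]; abel
    · rw [sub_mul, mul_sub, mul_sub, ← h1, ← h2]; abel
  · rintro ⟨h1, h2⟩
    have hu : H * A' + Z * B' = A := by
      have h3 : (2:ℝ) • (H * A' + Z * B') = (2:ℝ) • A := by
        have := congrArg₂ (· + ·) h1 h2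
        simp only [add_mul, mul_add, sub_mul, mul_sub] at this
        rw [two_smul, two_smul]
        linear_combination (norm := abel_nf) this
      exact smul_right_injective _ (two_ne_zero) h3
    have hv : H * B' + Z * A' = B := by
      have h3 : (2:ℝ) • (H * B' + Z * A') = (2:ℝ) • B := by
        have := congrArg₂ (· - ·) h1 h2
        simp only [add_mul, mul_add, sub_mul, mul_sub] at this
        rw [two_smul, two_smul]
        linear_combination (norm := abel_nf) this
      exact smul_right_injective _ (two_ne_zero) h3
    exact ⟨hu, hv, by rw [← hv]; abel, by rw [← hu]; abel⟩
end
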